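/- arXiv:1205.7089 — 3 statements merged into one kernel-verified Lean document; each statement's English description precedes it below -/
import Mathlib

section
/- With Cℓ and W as in the Ramond Clifford algebra setup, the Sugawara operators L^{Cℓ}_n = −(1/8) Σ_{r≥0} Σ_i (2r−n) e_{i,n−r} e_{i,r} + (1/8) Σ_{r<0} Σ_i (2r−n) e_{i,r} e_{i,n−r} + (d/16) δ_{n,0} satisfy [L^{Cℓ}_n, e_{i,m}] = −(n/2 + m) e_{i,n+m} for all i, n, m. -/
/-!
Every summand of `L_n` is a quadratic `e_{j,a} e_{j,b}` in the generators, and in any ring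
`AB·C − C·AB = A(BC + CB) − (AC + CA)B`. So the anticommutation relations make the commutator of
the `r`-th summand with `e_{i,m}` a multiple of `e_{i,n+m}` that vanishes unless `r = −m` or
`r = n + m`; both survivors contribute `−(n + 2m)/4 · e_{i,n+m}`, and the central term commutes.
Truncation makes all sums finite, so the commutator can be taken termwise.
-/

/-- The Sugawara operator
`L^{Cℓ}_n = −(1/8) Σ_{r≥0} Σ_i (2r−n) e_{i,n−r} e_{i,r}
          + (1/8) Σ_{r<0} Σ_i (2r−n) e_{i,r} e_{i,n−r} + (d/16) δ_{n,0}`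
on a module `W` over the Ramond Clifford algebra; the sum over `r ∈ ℤ` is a
`finsum`, well defined under the truncation hypothesis. -/
noncomputable def sugawaraOp {d : ℕ} {W : Type*} [AddCommGroup W] [Module ℂ W]
    (e : Fin d → ℤ → W →ₗ[ℂ] W) (n : ℤ) (w : W) : W :=
  (∑ᶠ r : ℤ,
      if 0 ≤ r then
        (-(8 : ℂ)⁻¹ * ((2 * r - n : ℤ) : ℂ)) • ∑ i : Fin d, e i (n - r) (e i r w)
      else
        ((8 : ℂ)⁻¹ * ((2 * r - n : ℤ) : ℂ)) • ∑ i : Fin d, e i r (e i (n - r) w))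
    + (if n = 0 then ((d : ℂ) / 16) • w else 0)

theorem finsum_ite_eq_add_ite_eq {α M : Type*} [AddCommMonoid M] [DecidableEq α] (a b : α) (v : M) :
    ∑ᶠ r, ((if r = a then v else 0) + if r = b then v else 0) = v + v := by
  have hfin (c : α) : Function.HasFiniteSupport fun r ↦ if r = c then v else 0 :=
    (Set.finite_singleton c).subset fun r hr ↦ of_not_not fun h ↦ hr (if_neg h)
  rw [finsum_add_distrib (hfin a) (hfin b), finsum_eq_single _ a fun r hr ↦ if_neg hr,
    finsum_eq_single _ b fun r hr ↦ if_neg hr, if_pos rfl, if_pos rfl]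

section Sugawara

variable {d : ℕ} {W : Type*} [AddCommGroup W] [Module ℂ W] (e : Fin d → ℤ → W →ₗ[ℂ] W)

def RamondCliffordRelations : Prop :=
  ∀ (i j : Fin d) (n m : ℤ) (w : W),
    e i n (e j m w) + e j m (e i n w) = if i = j ∧ n + m = 0 then (-2 : ℂ) • w else 0

noncomputable def sugawaraTerm (n r : ℤ) (w : W) : W :=
  if 0 ≤ r then
    (-(8 : ℂ)⁻¹ * ((2 * r - n : ℤ) : ℂ)) • ∑ i : Fin d, e i (n - r) (e i r w)
  else
    ((8 : ℂ)⁻¹ * ((2 * r - n : ℤ) : ℂ)) • ∑ i : Fin d, e i r (e i (n - r) w)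

theorem sugawaraOp_eq_finsum (n : ℤ) (w : W) :
    sugawaraOp e n w = (∑ᶠ r, sugawaraTerm e n r w) + if n = 0 then ((d : ℂ) / 16) • w else 0 :=
  rfl

theorem hasFiniteSupport_sugawaraTerm
    (htrunc : ∀ w : W, ∃ N : ℤ, ∀ (i : Fin d) (n : ℤ), N < n → e i n w = 0) (n : ℤ) (w : W) :
    Function.HasFiniteSupport fun r ↦ sugawaraTerm e n r w := by
  obtain ⟨N, hN⟩ := htrunc w
  refine (Set.finite_Icc (min (n - N) 0) (max N 0)).subset fun r hr ↦ ?_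
  contrapose! hr
  rw [Set.mem_Icc, not_and_or, not_le, not_le] at hr
  rw [Function.notMem_support, sugawaraTerm]
  split_ifs
  · simp [hN _ r (by omega)]
  · simp [hN _ (n - r) (by omega)]

variable {e}

theorem RamondCliffordRelations.comm_mode_mul_mode (hrel : RamondCliffordRelations e)
    (i j : Fin d) (a b m : ℤ) (w : W) :
    e j a (e j b (e i m w)) - e i m (e j a (e j b w)) =
      (if j = i ∧ b + m = 0 then (-2 : ℂ) • e j a w else 0)
        - if j = i ∧ a + m = 0 then (-2 : ℂ) • e j b w else 0 := by
  rw [eq_sub_of_add_eq (hrel j i b m w), map_sub, eq_sub_of_add_eq (hrel j i a m (e j b w)),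
    apply_ite (e j a), map_smul, map_zero]
  abel

theorem RamondCliffordRelations.comm_sum_mode_mul_mode (hrel : RamondCliffordRelations e)
    (i : Fin d) (a b m : ℤ) (w : W) :
    ∑ j, e j a (e j b (e i m w)) - e i m (∑ j, e j a (e j b w)) =
      (-2 : ℂ) • ((if b + m = 0 then e i a w else 0) - if a + m = 0 then e i b w else 0) := by
  rw [map_sum, ← Finset.sum_sub_distrib]
  simp only [hrel.comm_mode_mul_mode, ite_and, Finset.sum_sub_distrib, Finset.sum_ite_eq',
    Finset.mem_univ, if_true]
  split_ifs <;> simp [smul_sub]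

theorem RamondCliffordRelations.sugawaraTerm_comm (hrel : RamondCliffordRelations e)
    (i : Fin d) (n m r : ℤ) (w : W) :
    sugawaraTerm e n r (e i m w) - e i m (sugawaraTerm e n r w) =
      (if r = -m then (-((n : ℂ) + 2 * m) / 4) • e i (n + m) w else 0)
        + if r = n + m then (-((n : ℂ) + 2 * m) / 4) • e i (n + m) w else 0 := by
  unfold sugawaraTerm
  split_ifs <;> rw [map_smul, ← smul_sub, hrel.comm_sum_mode_mul_mode] <;> split_ifs <;> try omega
  all_goals subst_vars
  -- `ring_nf` identifies mode indices such as `n - -m` and `n + m`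
  all_goals try (ring_nf; module)
  -- left: `r = -m = n + m`, where both sides vanish because `n = -2m`
  all_goals obtain rfl : n = -m - m := by omega
  all_goals ring_nf; module

end Sugawara

/-- The Sugawara operators `L^{Cℓ}_n` on a locally-truncated module `W` over the
Ramond Clifford algebra satisfy `[L^{Cℓ}_n, e_{i,m}] = −(n/2 + m) e_{i,n+m}`. -/
theorem stmt6 {d : ℕ} {W : Type*} [AddCommGroup W] [Module ℂ W]
    (e : Fin d → ℤ → W →ₗ[ℂ] W)
    (hrel : ∀ (i j : Fin d) (n m : ℤ) (w : W),
      e i n (e j m w) + e j m (e i n w) = if i = j ∧ n + m = 0 then (-2 : ℂ) • w else 0)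
    (htrunc : ∀ w : W, ∃ N : ℤ, ∀ (i : Fin d) (n : ℤ), N < n → e i n w = 0) :
    ∀ (i : Fin d) (n m : ℤ) (w : W),
      sugawaraOp e n (e i m w) - e i m (sugawaraOp e n w)
        = (-((n : ℂ) / 2 + (m : ℂ))) • e i (n + m) w := by
  intro i n m w
  have hT := hasFiniteSupport_sugawaraTerm e htrunc n
  rw [sugawaraOp_eq_finsum, sugawaraOp_eq_finsum, map_add, map_finsum _ (hT w), apply_ite (e i m),
    map_smul, map_zero, add_sub_add_right_eq_sub,
    ← finsum_sub_distrib (hT _) ((hT w).fun_comp (map_zero (e i m))),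
    finsum_congr (RamondCliffordRelations.sugawaraTerm_comm hrel i n m · w),
    finsum_ite_eq_add_ite_eq]
  module
end

section
/- With Cℓ and W as above, the operators L^{Cℓ}_n define a Virasoro action of central charge d/2 on W, i.e. [L^{Cℓ}_n, L^{Cℓ}_m] = (n−m) L^{Cℓ}_{n+m} + (d/24)(n³−n) δ_{n+m,0}. -/
open Function

-- `Module.End` gets its commutator Lie bracket only from this non-global instance.
attribute [local instance] LieRing.ofAssociativeRing

lemma finsum_ite_eq_sub_ite_eq {ι M : Type*} [DecidableEq ι] [AddCommGroup M] (a b : ι)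
    (x y : M) : ∑ᶠ i, ((if i = a then x else 0) - (if i = b then y else 0)) = x - y := by
  have hfin (c : ι) (z : M) : HasFiniteSupport fun i ↦ if i = c then z else 0 :=
    (Set.finite_singleton c).subset fun i hi ↦ by_contra fun h ↦ hi (if_neg h)
  rw [finsum_sub_distrib (hfin a x) (hfin b y), finsum_eq_single _ a fun i hi ↦ if_neg hi,
    finsum_eq_single _ b fun i hi ↦ if_neg hi, if_pos rfl, if_pos rfl]

lemma finsum_add_comp_sub {G M : Type*} [AddGroup G] [AddCommMonoid M] {f g : G → M}
    (hf : HasFiniteSupport f) (hg : HasFiniteSupport g) (n : G) :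
    ∑ᶠ r, (f r + g r) = ∑ᶠ r, (f r + g (r - n)) := by
  have hshift := finsum_comp_equiv (Equiv.subRight n) (f := g)
  simp only [Equiv.subRight_apply] at hshift
  rw [finsum_add_distrib hf hg, finsum_add_distrib hf (hg.fun_comp_of_injective sub_left_injective),
    hshift]

lemma finsum_ite_Ico {M : Type*} [AddCommMonoid M] (a b : ℤ) (g : ℤ → M) :
    ∑ᶠ r, (if a ≤ r ∧ r < b then g r else 0) = ∑ j ∈ Finset.range (b - a).toNat, g (a + j) := by
  rw [finsum_eq_sum_of_support_subset (s := Finset.Ico a b), Int.Ico_eq_finset_map, Finset.sum_map]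
  · refine Finset.sum_congr rfl fun j hj ↦ if_pos ?_
    simp only [Finset.mem_range, Function.Embedding.trans_apply, Nat.castEmbedding_apply,
      addLeftEmbedding_apply] at hj ⊢
    omega
  · intro r hr
    by_contra hout
    simp only [Finset.coe_Ico, Set.mem_Ico] at hout
    exact hr (if_neg hout)

lemma sum_range_two_mul_sub_sq (k : ℕ) :
    ∑ j ∈ Finset.range k, (2 * (j : ℂ) - k) ^ 2 = ((k : ℂ) ^ 3 + 2 * k) / 3 := by
  suffices h : ∀ c : ℂ, ∑ j ∈ Finset.range k, (2 * (j : ℂ) - c) ^ 2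
      = 2 * k * (k - 1) * (2 * k - 1) / 3 - 2 * c * k * (k - 1) + k * c ^ 2 by
    rw [h]; ring
  intro c
  induction k with
  | zero => simp
  | succ k ih => rw [Finset.sum_range_succ, ih]; push_cast; ring

namespace LinearMap

section LocallyFiniteSum

variable {ι R M N : Type*} [Semiring R] [AddCommMonoid M] [Module R M]
  [AddCommMonoid N] [Module R N]

noncomputable def locallyFiniteSum (f : ι → M →ₗ[R] N)
    (hf : ∀ x, HasFiniteSupport fun i ↦ f i x) : M →ₗ[R] N where
  toFun x := ∑ᶠ i, f i x
  map_add' x y := by simp only [map_add]; exact finsum_add_distrib (hf x) (hf y)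
  map_smul' c x := by simp only [map_smul]; exact (smul_finsum' c (hf x)).symm

@[simp]
lemma locallyFiniteSum_apply (f : ι → M →ₗ[R] N) (hf : ∀ x, HasFiniteSupport fun i ↦ f i x)
    (x : M) : locallyFiniteSum f hf x = ∑ᶠ i, f i x :=
  rfl

end LocallyFiniteSum

section Commutator

variable {ι R M : Type*} [CommRing R] [AddCommGroup M] [Module R M]
  (f : ι → Module.End R M) (hf : ∀ x, HasFiniteSupport fun i ↦ f i x)

lemma lie_locallyFiniteSum_apply (g : Module.End R M) (x : M) :
    ⁅g, locallyFiniteSum f hf⁆ x = ∑ᶠ i, ⁅g, f i⁆ x := by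
  have hg : HasFiniteSupport fun i ↦ g (f i x) := (hf x).comp (map_zero g)
  simp only [Ring.lie_def, sub_apply, Module.End.mul_apply, locallyFiniteSum_apply]
  rw [map_finsum g (hf x), ← finsum_sub_distrib hg (hf (g x))]

lemma locallyFiniteSum_lie_apply (g : Module.End R M) (x : M) :
    ⁅locallyFiniteSum f hf, g⁆ x = ∑ᶠ i, ⁅f i, g⁆ x := by
  rw [← lie_skew, neg_apply, lie_locallyFiniteSum_apply, ← finsum_neg_distrib]
  simp only [← neg_apply, lie_skew]

end Commutator

end LinearMap

namespace RamondClifford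

open LinearMap

variable {d : ℕ} {W : Type*} [AddCommGroup W] [Module ℂ W] (e : Fin d → ℤ → Module.End ℂ W)

def IsRamondCliffordAction : Prop :=
  ∀ (i j : Fin d) (n m : ℤ),
    e i n * e j m + e j m * e i n = if i = j ∧ n + m = 0 then (-2 : ℂ) • 1 else 0

def IsLocallyTruncated : Prop := ∀ w : W, ∃ N : ℤ, ∀ (i : Fin d) (n : ℤ), N < n → e i n w = 0

def quad (a b : ℤ) : Module.End ℂ W := ∑ i, e i a * e i b

-- `Σ_i e_{i,a} e_{i,b}` normally ordered at threshold `t`: the mode `b` goes left when `b < t`.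
def normalQuad (t a b : ℤ) : Module.End ℂ W := if t ≤ b then quad e a b else -quad e b a

noncomputable def sugawaraCoeff (n r : ℤ) : ℂ := -(8 : ℂ)⁻¹ * ((2 * r - n : ℤ) : ℂ)

noncomputable def sugawaraTerm (n r : ℤ) : Module.End ℂ W :=
  sugawaraCoeff n r • normalQuad e 0 (n - r) r

noncomputable def bracketCoeff (n k : ℤ) : ℂ := -((2 * k + n : ℤ) : ℂ) / 2

noncomputable def sugawaraAnomaly (d : ℕ) (n r : ℤ) : ℂ :=
  (if 0 ≤ r ∧ r < n then (d : ℂ) * ((2 * r - n : ℤ) : ℂ) ^ 2 / 8 else 0)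
    - (if n ≤ r ∧ r < 0 then (d : ℂ) * ((2 * r - n : ℤ) : ℂ) ^ 2 / 8 else 0)

variable {e}

lemma isRamondCliffordAction_of_apply
    (hrel : ∀ (i j : Fin d) (n m : ℤ) (w : W),
      e i n (e j m w) + e j m (e i n w) = if i = j ∧ n + m = 0 then (-2 : ℂ) • w else 0) :
    IsRamondCliffordAction e := fun i j n m ↦ LinearMap.ext fun w ↦ by
  rw [LinearMap.add_apply, Module.End.mul_apply, Module.End.mul_apply, hrel]
  split_ifs <;> simp

lemma quad_add_quad_swap (he : IsRamondCliffordAction e) (a b : ℤ) :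
    quad e a b + quad e b a = if a + b = 0 then (-2 * d : ℂ) • 1 else 0 := by
  rw [quad, quad, ← Finset.sum_add_distrib, Finset.sum_congr rfl fun i _ ↦ he i i a b]
  split_ifs with h
  · simp only [h, and_true, Finset.sum_const, Finset.card_univ, Fintype.card_fin, if_true]
    module
  · simp [h]

lemma normalQuad_eq (he : IsRamondCliffordAction e) (t a b : ℤ) :
    normalQuad e t a b = quad e a b + (if b < t ∧ a + b = 0 then (2 * d : ℂ) else 0) • 1 := by
  by_cases h : t ≤ b
  · simp [normalQuad, h, h.not_gt]
  · rw [normalQuad, if_neg h,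
      show -quad e b a = quad e a b - (quad e a b + quad e b a) by abel, quad_add_quad_swap he]
    simp only [not_le.mp h, true_and]
    split_ifs <;> module

lemma quad_lie (he : IsRamondCliffordAction e) (a b : ℤ) (j : Fin d) (k : ℤ) :
    ⁅quad e a b, e j k⁆
      = (if a + k = 0 then (2 : ℂ) • e j b else 0) - (if b + k = 0 then (2 : ℂ) • e j a else 0) := by
  have hexpand (i : Fin d) : ⁅e i a * e i b, e j k⁆
      = e i a * (e i b * e j k + e j k * e i b) - (e i a * e j k + e j k * e i a) * e i b := by
    rw [Ring.lie_def]; noncomm_ring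
  simp only [quad, sum_lie, hexpand, he _ j, ite_and, mul_ite, ite_mul, Finset.sum_sub_distrib]
  split_ifs <;> simp
  abel

lemma normalQuad_lie (he : IsRamondCliffordAction e) (t a b : ℤ) (X : Module.End ℂ W) :
    ⁅normalQuad e t a b, X⁆ = ⁅quad e a b, X⁆ := by
  rw [normalQuad_eq he]
  split_ifs <;> simp [Ring.lie_def, add_mul, mul_add]

lemma lie_quad_of_lie_generator {L : Module.End ℂ W} {n : ℤ} {μ : ℤ → ℂ}
    (hL : ∀ i k, ⁅L, e i k⁆ = μ k • e i (n + k)) (a b : ℤ) :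
    ⁅L, quad e a b⁆ = μ a • quad e (n + a) b + μ b • quad e a (n + b) := by
  have hleibniz (x y : Module.End ℂ W) : ⁅L, x * y⁆ = ⁅L, x⁆ * y + x * ⁅L, y⁆ := by
    simp only [Ring.lie_def]; noncomm_ring
  simp only [quad, lie_sum, hleibniz, hL, smul_mul_assoc, mul_smul_comm, Finset.sum_add_distrib,
    Finset.smul_sum]

lemma lie_normalQuad_of_lie_generator {L : Module.End ℂ W} {n : ℤ} {μ : ℤ → ℂ}
    (hL : ∀ i k, ⁅L, e i k⁆ = μ k • e i (n + k)) (t a b : ℤ) :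
    ⁅L, normalQuad e t a b⁆
      = μ a • normalQuad e t (n + a) b + μ b • normalQuad e (n + t) a (n + b) := by
  by_cases h : t ≤ b
  · simp [normalQuad, h, lie_quad_of_lie_generator hL]
  · simp only [normalQuad, h, add_le_add_iff_left, if_false, lie_neg,
      lie_quad_of_lie_generator hL, smul_neg]
    abel

lemma hasFiniteSupport_normalQuad_apply (ht : IsLocallyTruncated e) (t p q : ℤ) (w : W) :
    HasFiniteSupport fun r ↦ normalQuad e t (p - r) (q + r) w := by
  obtain ⟨N, hN⟩ := ht w
  refine (Set.finite_Icc (min (p - N) (t - q)) (max (N - q) (t - q))).subset fun r hr ↦ ?_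
  by_contra hout
  rw [Set.mem_Icc, not_and_or, not_le, not_le] at hout
  refine hr ?_
  by_cases h : t ≤ q + r
  · simp [normalQuad, quad, h, hN _ (q + r) (by omega)]
  · simp [normalQuad, quad, h, hN _ (p - r) (by omega)]

lemma hasFiniteSupport_sugawaraTerm_apply (ht : IsLocallyTruncated e) (n : ℤ) (w : W) :
    HasFiniteSupport fun r ↦ sugawaraTerm e n r w := by
  have h := hasFiniteSupport_normalQuad_apply ht 0 n 0 w
  simp only [zero_add] at h
  exact h.smul_right (fun r ↦ sugawaraCoeff n r)

noncomputable def sugawaraSum (ht : IsLocallyTruncated e) (n : ℤ) : Module.End ℂ W :=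
  locallyFiniteSum (sugawaraTerm e n) (hasFiniteSupport_sugawaraTerm_apply ht n)

lemma sugawaraOp_eq (ht : IsLocallyTruncated e) (n : ℤ) :
    sugawaraOp e n = ⇑(sugawaraSum ht n + (if n = 0 then (d / 16 : ℂ) else 0) • 1) := by
  ext w
  rw [sugawaraOp, LinearMap.add_apply, sugawaraSum, locallyFiniteSum_apply]
  congr 1
  · refine finsum_congr fun r ↦ ?_
    by_cases hr : 0 ≤ r
    · simp [sugawaraTerm, sugawaraCoeff, normalQuad, quad, hr]
    · simp [sugawaraTerm, sugawaraCoeff, normalQuad, quad, hr, neg_mul, neg_smul]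
  · split_ifs <;> simp

lemma sugawaraOp_sub_swap_eq_lie (ht : IsLocallyTruncated e) (n m : ℤ) (w : W) :
    sugawaraOp e n (sugawaraOp e m w) - sugawaraOp e m (sugawaraOp e n w)
      = ⁅sugawaraSum ht n, sugawaraSum ht m⁆ w := by
  simp only [sugawaraOp_eq ht, Ring.lie_def, LinearMap.add_apply, LinearMap.sub_apply,
    LinearMap.smul_apply, Module.End.mul_apply, Module.End.one_apply, map_add, map_smul]
  module

lemma sugawaraSum_lie_generator (he : IsRamondCliffordAction e) (ht : IsLocallyTruncated e)
    (n : ℤ) (j : Fin d) (k : ℤ) :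
    ⁅sugawaraSum ht n, e j k⁆ = bracketCoeff n k • e j (n + k) := by
  ext w
  have hterm (r : ℤ) : ⁅sugawaraTerm e n r, e j k⁆ w
      = (if r = n + k then (2 * sugawaraCoeff n (n + k)) • e j (n + k) w else 0)
        - (if r = -k then (2 * sugawaraCoeff n (-k)) • e j (n + k) w else 0) := by
    have c1 : n - r + k = 0 ↔ r = n + k := by omega
    have c2 : r + k = 0 ↔ r = -k := by omega
    rw [sugawaraTerm, smul_lie, normalQuad_lie he, quad_lie he]
    simp only [c1, c2]
    split_ifs with h1 h2 h2 <;> subst_vars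
    · simp [show n - (n + k) = n + k by omega, ← h2]
    all_goals simp [smul_smul, mul_comm]
  rw [sugawaraSum, locallyFiniteSum_lie_apply, finsum_congr hterm, finsum_ite_eq_sub_ite_eq,
    ← sub_smul, LinearMap.smul_apply]
  congr 1
  simp only [sugawaraCoeff, bracketCoeff]
  push_cast
  ring

lemma sugawaraSum_lie_sugawaraTerm (he : IsRamondCliffordAction e) (ht : IsLocallyTruncated e)
    (n m r : ℤ) :
    ⁅sugawaraSum ht n, sugawaraTerm e m r⁆
      = (sugawaraCoeff m r * bracketCoeff n (m - r)) • normalQuad e 0 (n + m - r) r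
        + (sugawaraCoeff m r * bracketCoeff n r) • normalQuad e n (m - r) (n + r) := by
  rw [sugawaraTerm, lie_smul, lie_normalQuad_of_lie_generator (sugawaraSum_lie_generator he ht n),
    add_zero, show n + (m - r) = n + m - r by ring, smul_add, smul_smul, smul_smul]

-- After the shift both quadratics are `quad e (n + m - r) r` up to scalars; they are normally
-- ordered at thresholds `0` and `n`, which differ exactly between `0` and `n`.
lemma sugawara_summands_add_shift (he : IsRamondCliffordAction e) (n m r : ℤ) :
    (sugawaraCoeff m r * bracketCoeff n (m - r)) • normalQuad e 0 (n + m - r) r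
      + (sugawaraCoeff m (r - n) * bracketCoeff n (r - n))
        • normalQuad e n (m - (r - n)) (n + (r - n))
      = ((n - m : ℤ) : ℂ) • sugawaraTerm e (n + m) r
        + (if n + m = 0 then sugawaraAnomaly d n r else 0) • 1 := by
  rw [show m - (r - n) = n + m - r by ring, show n + (r - n) = r by ring, sugawaraTerm,
    normalQuad_eq he, normalQuad_eq he, show n + m - r + r = n + m by ring]
  simp only [sugawaraCoeff, bracketCoeff, sugawaraAnomaly]
  by_cases hnm : n + m = 0
  · obtain rfl : m = -n := by omega
    simp only [hnm, and_true, if_true]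
    split_ifs <;> first | omega | (push_cast; module)
  · simp only [hnm, and_false, if_false]
    push_cast
    module

lemma hasFiniteSupport_sugawaraAnomaly (d : ℕ) (n : ℤ) :
    HasFiniteSupport (sugawaraAnomaly d n) :=
  (Set.finite_Icc (min n 0) (max n 0)).subset fun r hr ↦ by
    by_contra hout
    rw [Set.mem_Icc] at hout
    exact hr (by rw [sugawaraAnomaly, if_neg (by omega), if_neg (by omega), sub_zero])

lemma finsum_sugawaraAnomaly (d : ℕ) (n : ℤ) :
    ∑ᶠ r, sugawaraAnomaly d n r = d * ((n : ℂ) ^ 3 + 2 * n) / 24 := by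
  obtain ⟨k, rfl | rfl⟩ := Int.eq_nat_or_neg n
  · have hpos (r : ℤ) : sugawaraAnomaly d k r
        = if 0 ≤ r ∧ r < k then (d : ℂ) * ((2 * r - k : ℤ) : ℂ) ^ 2 / 8 else 0 := by
      rw [sugawaraAnomaly, if_neg (show ¬((k : ℤ) ≤ r ∧ r < 0) by omega), sub_zero]
    rw [finsum_congr hpos, finsum_ite_Ico]
    simp only [sub_zero, Int.toNat_natCast, zero_add]
    push_cast
    rw [← Finset.sum_div, ← Finset.mul_sum, sum_range_two_mul_sub_sq]
    ring
  · have hneg (r : ℤ) : sugawaraAnomaly d (-k) r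
        = -(if -k ≤ r ∧ r < 0 then (d : ℂ) * ((2 * r + k : ℤ) : ℂ) ^ 2 / 8 else 0) := by
      rw [sugawaraAnomaly, if_neg (by omega), zero_sub, sub_neg_eq_add]
    rw [finsum_congr hneg, finsum_neg_distrib, finsum_ite_Ico]
    simp only [zero_sub, neg_neg, Int.toNat_natCast]
    push_cast
    simp only [show ∀ j : ℂ, 2 * (-k + j) + k = 2 * j - k from fun j ↦ by ring]
    rw [← Finset.sum_div, ← Finset.mul_sum, sum_range_two_mul_sub_sq]
    ring

lemma sugawaraSum_lie_sugawaraSum (he : IsRamondCliffordAction e) (ht : IsLocallyTruncated e)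
    (n m : ℤ) :
    ⁅sugawaraSum ht n, sugawaraSum ht m⁆
      = ((n - m : ℤ) : ℂ) • sugawaraSum ht (n + m)
        + (if n + m = 0 then (d * ((n : ℂ) ^ 3 + 2 * n) / 24 : ℂ) else 0) • 1 := by
  ext w
  set A := fun r ↦ ((sugawaraCoeff m r * bracketCoeff n (m - r)) • normalQuad e 0 (n + m - r) r) w
  set B := fun r ↦ ((sugawaraCoeff m r * bracketCoeff n r) • normalQuad e n (m - r) (n + r)) w
  have hA : HasFiniteSupport A := by
    have h := hasFiniteSupport_normalQuad_apply ht 0 (n + m) 0 w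
    simp only [zero_add] at h
    exact h.smul_right _
  have hB : HasFiniteSupport B := (hasFiniteSupport_normalQuad_apply ht n m n w).smul_right _
  calc ⁅sugawaraSum ht n, sugawaraSum ht m⁆ w = ∑ᶠ r, (A r + B r) :=
        (lie_locallyFiniteSum_apply _ _ _ _).trans
          (finsum_congr fun r ↦ by rw [sugawaraSum_lie_sugawaraTerm he ht]; rfl)
    _ = ∑ᶠ r, (A r + B (r - n)) := finsum_add_comp_sub hA hB n
    _ = ∑ᶠ r, (((n - m : ℤ) : ℂ) • sugawaraTerm e (n + m) r w
          + (if n + m = 0 then sugawaraAnomaly d n r else 0) • w) :=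
        finsum_congr fun r ↦ by
          have h := congr($(sugawara_summands_add_shift he n m r) w)
          simp only [LinearMap.add_apply, LinearMap.smul_apply, Module.End.one_apply] at h
          exact h
    _ = _ := by
      have hT := hasFiniteSupport_sugawaraTerm_apply ht (n + m) w
      have hZ := hasFiniteSupport_sugawaraAnomaly d n
      by_cases hnm : n + m = 0
      · simp only [if_pos hnm]
        rw [finsum_add_distrib (by fun_prop) (by fun_prop), ← smul_finsum, ← finsum_smul,
          finsum_sugawaraAnomaly]
        rfl
      · simp only [if_neg hnm, zero_smul, add_zero]
        rw [← smul_finsum]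
        rfl

end RamondClifford

/-- The Sugawara operators `L^{Cℓ}_n` on a locally-truncated module `W` over the
Ramond Clifford algebra define a Virasoro action of central charge `d/2`:
`[L^{Cℓ}_n, L^{Cℓ}_m] = (n−m) L^{Cℓ}_{n+m} + (d/24)(n³−n) δ_{n+m,0}`. -/
theorem stmt7 {d : ℕ} {W : Type*} [AddCommGroup W] [Module ℂ W]
    (e : Fin d → ℤ → W →ₗ[ℂ] W)
    (hrel : ∀ (i j : Fin d) (n m : ℤ) (w : W),
      e i n (e j m w) + e j m (e i n w) = if i = j ∧ n + m = 0 then (-2 : ℂ) • w else 0)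
    (htrunc : ∀ w : W, ∃ N : ℤ, ∀ (i : Fin d) (n : ℤ), N < n → e i n w = 0) :
    ∀ (n m : ℤ) (w : W),
      sugawaraOp e n (sugawaraOp e m w) - sugawaraOp e m (sugawaraOp e n w)
        = ((n - m : ℤ) : ℂ) • sugawaraOp e (n + m) w
          + (if n + m = 0 then ((d : ℂ) / 24) * ((n : ℂ) ^ 3 - (n : ℂ)) else 0) • w := by
  intro n m w
  have ht : RamondClifford.IsLocallyTruncated e := htrunc
  rw [RamondClifford.sugawaraOp_sub_swap_eq_lie ht, RamondClifford.sugawaraOp_eq ht,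
    RamondClifford.sugawaraSum_lie_sugawaraSum
      (RamondClifford.isRamondCliffordAction_of_apply hrel)]
  simp only [LinearMap.add_apply, LinearMap.smul_apply, Module.End.one_apply]
  by_cases hnm : n + m = 0
  · obtain rfl : m = -n := by omega
    simp only [hnm, if_true]
    push_cast
    module
  · simp only [hnm, if_false]
    module
end

section
/- Under the hypotheses of the Chern–Simons setup, for A ∈ g the Cartan-model identities hold: (d_G CS_{λ*}(Θ))_A = λ*(Ω∧Ω) − λ*(A, dΘ), and (d_G λ*(−,Θ))_A = λ*(A, dΘ) − λ*(A,A), where d_G is the Cartan differential (d_G ξ)_A = dξ_A − ι_{A^P} ξ_A. -/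
/-!
Put `τ(X, Y, Z) = λ*(Θ X, ⁅Θ Y, Θ Z⁆)`, which is alternating by ad-invariance. Since
`Ω = dΘ + ½[Θ∧Θ]`, one has `CS = λ*(Θ∧dΘ) + 2τ`. The Leibniz rule and `d(dΘ) = 0` give
`d λ*(Θ∧dΘ) = λ*(dΘ∧dΘ)`, differentiating `τ` gives `dτ = λ*(dΘ∧½[Θ∧Θ])`, and
`λ*([Θ∧Θ]∧[Θ∧Θ]) = 0` by the Jacobi identity; together, `d CS = λ*(Ω∧Ω)`.
As `Ω` is horizontal, contracting `CS` with `A^P` leaves `λ*(A, Ω) - λ*(A, ½[Θ∧Θ]) = λ*(A, dΘ)`.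
-/

namespace LieCochain

variable {T M C : Type*} [AddCommGroup M] [AddCommGroup C]

def wedge₁₂ (B : M →+ M →+ C) (α : T → M) (β : T → T → M) (X Y Z : T) : C :=
  B (α X) (β Y Z) - B (α Y) (β X Z) + B (α Z) (β X Y)

def wedge₂₂ (B : M →+ M →+ C) (β γ : T → T → M) (X Y Z W : T) : C :=
  B (β X Y) (γ Z W) - B (β X Z) (γ Y W) + B (β X W) (γ Y Z)
    + B (β Y Z) (γ X W) - B (β Y W) (γ X Z) + B (β Z W) (γ X Y)

theorem wedge₁₂_add_right (B : M →+ M →+ C) (α : T → M) (β γ : T → T → M) :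
    wedge₁₂ B α (β + γ) = wedge₁₂ B α β + wedge₁₂ B α γ := by
  funext X Y Z
  simp only [wedge₁₂, Pi.add_apply, map_add]
  abel

theorem wedge₂₂_comm (B : M →+ M →+ C) (hsymm : ∀ u v, B u v = B v u) (β γ : T → T → M) :
    wedge₂₂ B β γ = wedge₂₂ B γ β := by
  funext X Y Z W
  simp only [wedge₂₂, hsymm (β _ _)]
  abel

theorem wedge₂₂_add_self (B : M →+ M →+ C) (hsymm : ∀ u v, B u v = B v u) (β γ : T → T → M) :
    wedge₂₂ B (β + γ) (β + γ) = wedge₂₂ B β β + 2 • wedge₂₂ B β γ + wedge₂₂ B γ γ :=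
  calc wedge₂₂ B (β + γ) (β + γ)
      = wedge₂₂ B β β + wedge₂₂ B β γ + wedge₂₂ B γ β + wedge₂₂ B γ γ := by
        funext X Y Z W
        simp only [wedge₂₂, Pi.add_apply, map_add, AddMonoidHom.add_apply]
        abel
    _ = wedge₂₂ B β β + 2 • wedge₂₂ B β γ + wedge₂₂ B γ γ := by
        rw [wedge₂₂_comm B hsymm γ β, two_nsmul, add_assoc (wedge₂₂ B β β)]

section Invariant

variable {L : Type*} [LieRing L] (B : L →+ L →+ C)

/-- `½[α∧α]`. -/
def halfBracket (α : T → L) (X Y : T) : L :=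
  ⁅α X, α Y⁆

/-- `(1/6) λ(α∧[α∧α])`. -/
def cartanForm (α : T → L) (X Y Z : T) : C :=
  B (α X) ⁅α Y, α Z⁆

theorem apply_lie_cycle (hsymm : ∀ u v, B u v = B v u)
    (hinv : ∀ w u v : L, B ⁅w, u⁆ v + B u ⁅w, v⁆ = 0) (u v w : L) :
    B u ⁅v, w⁆ = B v ⁅w, u⁆ := by
  rw [hsymm v, eq_neg_of_add_eq_zero_left (hinv w u v), ← map_neg, lie_skew]

theorem wedge₁₂_halfBracket (hsymm : ∀ u v, B u v = B v u)
    (hinv : ∀ w u v : L, B ⁅w, u⁆ v + B u ⁅w, v⁆ = 0) (α : T → L) :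
    wedge₁₂ B α (halfBracket α) = 3 • cartanForm B α := by
  funext X Y Z
  simp only [wedge₁₂, halfBracket, cartanForm, Pi.smul_apply]
  rw [apply_lie_cycle B hsymm hinv (α Z), apply_lie_cycle B hsymm hinv (α X),
    ← lie_skew (α X) (α Z), map_neg]
  abel

theorem apply_lie_derivation (hsymm : ∀ u v, B u v = B v u)
    (hinv : ∀ w u v : L, B ⁅w, u⁆ v + B u ⁅w, v⁆ = 0) (ρ : T → C →+ C) (σ : T → L →+ L)
    (hB : ∀ X u v, ρ X (B u v) = B (σ X u) v + B u (σ X v))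
    (hσ : ∀ X u v, σ X ⁅u, v⁆ = ⁅σ X u, v⁆ + ⁅u, σ X v⁆) (X : T) (u v w : L) :
    ρ X (B u ⁅v, w⁆) = B (σ X u) ⁅v, w⁆ + B (σ X v) ⁅w, u⁆ + B (σ X w) ⁅u, v⁆ := by
  rw [hB, hσ, map_add, apply_lie_cycle B hsymm hinv u (σ X v),
    apply_lie_cycle B hsymm hinv u v, apply_lie_cycle B hsymm hinv v (σ X w), add_assoc]

theorem wedge₂₂_halfBracket_self (hsymm : ∀ u v, B u v = B v u)
    (hinv : ∀ w u v : L, B ⁅w, u⁆ v + B u ⁅w, v⁆ = 0) (α : T → L) :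
    wedge₂₂ B (halfBracket α) (halfBracket α) = 0 := by
  funext X Y Z W
  have hjacobi : ⁅α Y, ⁅α Z, α W⁆⁆ - ⁅α Z, ⁅α Y, α W⁆⁆ + ⁅α W, ⁅α Y, α Z⁆⁆ = 0 := by
    rw [← lie_lie, ← lie_skew (α W) ⁅α Y, α Z⁆, add_neg_cancel]
  replace hjacobi := congrArg (B (α X)) hjacobi
  simp only [map_add, map_sub, map_zero] at hjacobi
  simp only [wedge₂₂, halfBracket, Pi.zero_apply]
  rw [hsymm ⁅α X, α Y⁆, hsymm ⁅α X, α Z⁆, hsymm ⁅α X, α W⁆,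
    apply_lie_cycle B hsymm hinv ⁅α Y, α Z⁆, apply_lie_cycle B hsymm hinv ⁅α Y, α W⁆,
    apply_lie_cycle B hsymm hinv ⁅α Z, α W⁆]
  linear_combination (norm := abel) 2 • hjacobi

variable [Module ℝ C]

/-- `CS = λ(α∧Ω) - (1/6) λ(α∧[α∧α])`, with `[α∧α](X, Y) = ⁅α X, α Y⁆ - ⁅α Y, α X⁆`. -/
noncomputable def chernSimons (α : T → L) (Ω : T → T → L) : T → T → T → C :=
  wedge₁₂ B α Ω - (6 : ℝ)⁻¹ • wedge₁₂ B α (fun X Y => ⁅α X, α Y⁆ - ⁅α Y, α X⁆)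

theorem chernSimons_sub_wedge₁₂ (hsymm : ∀ u v, B u v = B v u)
    (hinv : ∀ w u v : L, B ⁅w, u⁆ v + B u ⁅w, v⁆ = 0) (α : T → L) (Ω : T → T → L) :
    chernSimons B α Ω = wedge₁₂ B α Ω - cartanForm B α := by
  have hsquare : (fun X Y => ⁅α X, α Y⁆ - ⁅α Y, α X⁆) = 2 • halfBracket α := by
    funext X Y
    rw [← lie_skew (α Y) (α X), sub_neg_eq_add, two_nsmul]
    rfl
  have hwedge : wedge₁₂ B α (2 • halfBracket α) = 2 • wedge₁₂ B α (halfBracket α) := by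
    funext X Y Z
    simp only [wedge₁₂, Pi.smul_apply, map_nsmul, smul_sub, smul_add]
  rw [chernSimons, hsquare, hwedge, wedge₁₂_halfBracket B hsymm hinv, smul_smul,
    ← Nat.cast_smul_eq_nsmul ℝ, smul_smul]
  norm_num

theorem chernSimons_add_halfBracket (hsymm : ∀ u v, B u v = B v u)
    (hinv : ∀ w u v : L, B ⁅w, u⁆ v + B u ⁅w, v⁆ = 0) (α : T → L) (β : T → T → L) :
    chernSimons B α (β + halfBracket α) = wedge₁₂ B α β + (2 : ℕ) • cartanForm B α := by
  rw [chernSimons_sub_wedge₁₂ B hsymm hinv, wedge₁₂_add_right, wedge₁₂_halfBracket B hsymm hinv]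
  abel

theorem chernSimons_apply_of_horizontal (hsymm : ∀ u v, B u v = B v u)
    (hinv : ∀ w u v : L, B ⁅w, u⁆ v + B u ⁅w, v⁆ = 0) (α : T → L) (Ω : T → T → L) (A : T)
    (hΩ : ∀ X, Ω A X = 0) (X Y : T) :
    chernSimons B α Ω A X Y = B (α A) (Ω X Y - ⁅α X, α Y⁆) := by
  rw [chernSimons_sub_wedge₁₂ B hsymm hinv]
  simp only [Pi.sub_apply, wedge₁₂, cartanForm, hΩ, map_zero, map_sub]
  abel

end Invariant

variable [LieRing T]

def d₁ (σ : T → M →+ M) (α : T → M) (X Y : T) : M :=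
  σ X (α Y) - σ Y (α X) - α ⁅X, Y⁆

def d₂ (σ : T → M →+ M) (β : T → T → M) (X Y Z : T) : M :=
  σ X (β Y Z) - σ Y (β X Z) + σ Z (β X Y) - β ⁅X, Y⁆ Z + β ⁅X, Z⁆ Y - β ⁅Y, Z⁆ X

def d₃ (ρ : T → C →+ C) (γ : T → T → T → C) (X Y Z W : T) : C :=
  ρ X (γ Y Z W) - ρ Y (γ X Z W) + ρ Z (γ X Y W) - ρ W (γ X Y Z)
    - γ ⁅X, Y⁆ Z W + γ ⁅X, Z⁆ Y W - γ ⁅X, W⁆ Y Z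
    - γ ⁅Y, Z⁆ X W + γ ⁅Y, W⁆ X Z - γ ⁅Z, W⁆ X Y

theorem d₃_add (ρ : T → C →+ C) (γ γ' : T → T → T → C) :
    d₃ ρ (γ + γ') = d₃ ρ γ + d₃ ρ γ' := by
  funext X Y Z W
  simp only [d₃, Pi.add_apply, map_add]
  abel

theorem d₃_nsmul (ρ : T → C →+ C) (n : ℕ) (γ : T → T → T → C) :
    d₃ ρ (n • γ) = n • d₃ ρ γ := by
  funext X Y Z W
  simp only [d₃, Pi.smul_apply, map_nsmul, smul_sub, smul_add]

theorem d₂_d₁ (σ : T → M →+ M) (hσ : ∀ X Y u, σ ⁅X, Y⁆ u = σ X (σ Y u) - σ Y (σ X u))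
    (α : T →+ M) : d₂ σ (d₁ σ α) = 0 := by
  funext X Y Z
  have hjacobi : ⁅⁅X, Y⁆, Z⁆ - ⁅⁅X, Z⁆, Y⁆ + ⁅⁅Y, Z⁆, X⁆ = 0 := by
    rw [← lie_skew ⁅X, Z⁆ Y, ← lie_skew ⁅Y, Z⁆ X, lie_lie]
    abel
  replace hjacobi := congrArg α hjacobi
  simp only [map_add, map_sub, map_zero] at hjacobi
  simp only [d₂, d₁, map_sub, hσ, Pi.zero_apply]
  linear_combination (norm := abel) hjacobi

theorem d₃_wedge₁₂_of_d₂_eq_zero (ρ : T → C →+ C) (σ : T → M →+ M) (B : M →+ M →+ C)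
    (hB : ∀ X u v, ρ X (B u v) = B (σ X u) v + B u (σ X v)) (α : T → M) (β : T → T → M)
    (hβ : d₂ σ β = 0) : d₃ ρ (wedge₁₂ B α β) = wedge₂₂ B (d₁ σ α) β := by
  funext X Y Z W
  have hβ' : ∀ P Q R S, B (α P) (d₂ σ β Q R S) = 0 := by simp [hβ]
  simp only [d₂, map_add, map_sub] at hβ'
  simp only [d₃, wedge₁₂, wedge₂₂, d₁, map_add, map_sub, hB, AddMonoidHom.sub_apply]
  linear_combination (norm := abel) hβ' W X Y Z - hβ' X Y Z W + hβ' Y X Z W - hβ' Z X Y W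

theorem d₃_cartanForm {L : Type*} [LieRing L] (B : L →+ L →+ C) (hsymm : ∀ u v, B u v = B v u)
    (hinv : ∀ w u v : L, B ⁅w, u⁆ v + B u ⁅w, v⁆ = 0) (ρ : T → C →+ C) (σ : T → L →+ L)
    (hB : ∀ X u v, ρ X (B u v) = B (σ X u) v + B u (σ X v))
    (hσ : ∀ X u v, σ X ⁅u, v⁆ = ⁅σ X u, v⁆ + ⁅u, σ X v⁆) (α : T → L) :
    d₃ ρ (cartanForm B α) = wedge₂₂ B (d₁ σ α) (halfBracket α) := by
  funext X Y Z W
  simp only [d₃, wedge₂₂, d₁, cartanForm, halfBracket,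
    apply_lie_derivation B hsymm hinv ρ σ hB hσ, map_sub, AddMonoidHom.sub_apply,
    ← lie_skew (α W) (α X), ← lie_skew (α W) (α Y), ← lie_skew (α Z) (α X), map_neg]
  abel

theorem d₃_chernSimons {L : Type*} [LieRing L] [Module ℝ C] (B : L →+ L →+ C)
    (hsymm : ∀ u v, B u v = B v u) (hinv : ∀ w u v : L, B ⁅w, u⁆ v + B u ⁅w, v⁆ = 0)
    (ρ : T → C →+ C) (σ : T → L →+ L) (hB : ∀ X u v, ρ X (B u v) = B (σ X u) v + B u (σ X v))
    (hσ : ∀ X u v, σ X ⁅u, v⁆ = ⁅σ X u, v⁆ + ⁅u, σ X v⁆)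
    (hσlie : ∀ X Y u, σ ⁅X, Y⁆ u = σ X (σ Y u) - σ Y (σ X u)) (α : T →+ L) :
    d₃ ρ (chernSimons B α (d₁ σ α + halfBracket α))
      = wedge₂₂ B (d₁ σ α + halfBracket α) (d₁ σ α + halfBracket α) :=
  calc d₃ ρ (chernSimons B α (d₁ σ α + halfBracket α))
      = d₃ ρ (wedge₁₂ B α (d₁ σ α)) + (2 : ℕ) • d₃ ρ (cartanForm B α) := by
        rw [chernSimons_add_halfBracket B hsymm hinv, d₃_add, d₃_nsmul]
    _ = wedge₂₂ B (d₁ σ α) (d₁ σ α) + 2 • wedge₂₂ B (d₁ σ α) (halfBracket α) := by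
        rw [d₃_cartanForm B hsymm hinv ρ σ hB hσ,
          d₃_wedge₁₂_of_d₂_eq_zero ρ σ B hB α _ (d₂_d₁ σ hσlie α)]
    _ = wedge₂₂ B (d₁ σ α + halfBracket α) (d₁ σ α + halfBracket α) := by
        rw [wedge₂₂_add_self B hsymm, wedge₂₂_halfBracket_self B hsymm hinv, add_zero]

end LieCochain

open LieCochain

/-- `C` models the functions on `P`, `T` the vector fields, `Fg` the `g`-valued functions,
`ac`/`acg` the action of vector fields, `fund A = A^P`, and `const A` the constant function `A`;
forms are recorded through their values on vector fields. -/
theorem stmt13_general {C T Fg g : Type*} [CommRing C] [Algebra ℝ C] [LieRing T]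
    [LieRing Fg]
    (ac : T → C → C) (acg : T → Fg → Fg) (lamF : Fg → Fg → C) (Θ : T → Fg)
    (fund : g → T) (const : g → Fg)
    (hacadd : ∀ X f f', ac X (f + f') = ac X f + ac X f')
    (hacgadd : ∀ X u v, acg X (u + v) = acg X u + acg X v)
    (hacglie : ∀ X Y u, acg ⁅X, Y⁆ u = acg X (acg Y u) - acg Y (acg X u))
    (hacgbr : ∀ X u v, acg X ⁅u, v⁆ = ⁅acg X u, v⁆ + ⁅u, acg X v⁆)
    (hlamadd1 : ∀ u u' v, lamF (u + u') v = lamF u v + lamF u' v)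
    (hlamadd2 : ∀ u v v', lamF u (v + v') = lamF u v + lamF u v')
    (hlamsymm : ∀ u v, lamF u v = lamF v u)
    (hlaminv : ∀ w u v : Fg, lamF ⁅w, u⁆ v + lamF u ⁅w, v⁆ = 0)
    (hlamder : ∀ X u v, ac X (lamF u v) = lamF (acg X u) v + lamF u (acg X v))
    (hΘadd : ∀ X Y, Θ (X + Y) = Θ X + Θ Y)
    -- the `G`-action: fundamental vector fields, constants, connection axioms
    (hΘfund : ∀ a : g, Θ (fund a) = const a)
    (hconstder : ∀ (X : T) (a : g), acg X (const a) = 0)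
    (hequivΘ : ∀ (a : g) (X : T),
      acg (fund a) (Θ X) - Θ ⁅fund a, X⁆ = - ⁅const a, Θ X⁆)
    -- `dΘ`, curvature, and the Chern–Simons 3-form
    (dΘ : T → T → Fg)
    (hdΘ : ∀ X Y, dΘ X Y = acg X (Θ Y) - acg Y (Θ X) - Θ ⁅X, Y⁆)
    (Om : T → T → Fg)
    (hOm : ∀ X Y, Om X Y = dΘ X Y + ⁅Θ X, Θ Y⁆)
    (CS : T → T → T → C)
    (hCS : ∀ X Y Z, CS X Y Z
      = lamF (Θ X) (Om Y Z) - lamF (Θ Y) (Om X Z) + lamF (Θ Z) (Om X Y)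
        - (6 : ℝ)⁻¹ •
          (lamF (Θ X) (⁅Θ Y, Θ Z⁆ - ⁅Θ Z, Θ Y⁆)
            - lamF (Θ Y) (⁅Θ X, Θ Z⁆ - ⁅Θ Z, Θ X⁆)
            + lamF (Θ Z) (⁅Θ X, Θ Y⁆ - ⁅Θ Y, Θ X⁆))) :
    -- `(d_G CS)_A = λ*(Ω∧Ω) − λ*(A,dΘ)`:
    (∀ X Y Z Wv : T,
      ac X (CS Y Z Wv) - ac Y (CS X Z Wv) + ac Z (CS X Y Wv) - ac Wv (CS X Y Z)
        - CS ⁅X, Y⁆ Z Wv + CS ⁅X, Z⁆ Y Wv - CS ⁅X, Wv⁆ Y Z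
        - CS ⁅Y, Z⁆ X Wv + CS ⁅Y, Wv⁆ X Z - CS ⁅Z, Wv⁆ X Y
      = lamF (Om X Y) (Om Z Wv) - lamF (Om X Z) (Om Y Wv) + lamF (Om X Wv) (Om Y Z)
          + lamF (Om Y Z) (Om X Wv) - lamF (Om Y Wv) (Om X Z)
          + lamF (Om Z Wv) (Om X Y)) ∧
    (∀ (a : g) (X Y : T), CS (fund a) X Y = lamF (const a) (dΘ X Y)) ∧
    -- `(d_G λ*(−,Θ))_A = λ*(A,dΘ) − λ*(A,A)`:
    (∀ (a : g) (X Y : T),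
      ac X (lamF (const a) (Θ Y)) - ac Y (lamF (const a) (Θ X))
        - lamF (const a) (Θ ⁅X, Y⁆) = lamF (const a) (dΘ X Y)) ∧
    (∀ a : g, lamF (const a) (Θ (fund a)) = lamF (const a) (const a)) := by
  let ρ : T → C →+ C := fun X => AddMonoidHom.mk' (ac X) (hacadd X)
  let σ : T → Fg →+ Fg := fun X => AddMonoidHom.mk' (acg X) (hacgadd X)
  let lam : Fg →+ Fg →+ C := AddMonoidHom.mk' (fun u => AddMonoidHom.mk' (lamF u) (hlamadd2 u))
    fun u u' => AddMonoidHom.ext (hlamadd1 u u')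
  let θ : T →+ Fg := AddMonoidHom.mk' Θ hΘadd
  have hdΘ' : dΘ = d₁ σ θ := funext₂ hdΘ
  have hOm' : Om = dΘ + halfBracket θ := funext₂ hOm
  have hCS' : CS = chernSimons lam θ Om := funext₃ hCS
  have hhorizontal (a : g) (X : T) : Om (fund a) X = 0 := by
    rw [hOm, hdΘ, hΘfund, hconstder, sub_zero, hequivΘ, neg_add_cancel]
  have hdCS : d₃ ρ CS = wedge₂₂ lam Om Om := by
    rw [hCS', hOm', hdΘ']
    exact d₃_chernSimons lam hlamsymm hlaminv ρ σ hlamder hacgbr hacglie θ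
  refine ⟨fun X Y Z W => congrFun (congrFun₃ hdCS X Y Z) W, fun a X Y => ?_, fun a X Y => ?_,
    fun a => by rw [hΘfund]⟩
  · rw [hCS', chernSimons_apply_of_horizontal lam hlamsymm hlaminv θ Om _ (hhorizontal a), hOm]
    change lamF (Θ (fund a)) (dΘ X Y + ⁅Θ X, Θ Y⁆ - ⁅Θ X, Θ Y⁆) = _
    rw [add_sub_cancel_right, hΘfund]
  · rw [hlamder, hlamder, hconstder, hconstder, hdΘ]
    change lam 0 _ + _ - (lam 0 _ + _) - _ = lam _ (_ - _ - _)
    simp only [map_zero, map_sub, AddMonoidHom.zero_apply, zero_add]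
    rfl

/-- The Cartan-model identities `(d_G CS_{λ*}(Θ))_A = λ*(Ω∧Ω) − λ*(A,dΘ)` and
`(d_G λ*(−,Θ))_A = λ*(A,dΘ) − λ*(A,A)`.

Algebraic model (as in the Chern–Simons setup): `C` the functions on `P`, `T` the
vector fields, `Fg` the `g`-valued functions, `fund A = A^P` the fundamental vector
fields, `const : g → Fg` the constant functions, `Θ` the connection
(`Θ(A^P) = A`, equivariance `L_{A^P}Θ = −[A,Θ]`), `dΘ` and `Ω` as usual.
The equation of degree-4 Cartan cochains splits into a 4-form part
`dCS = λ*(Ω∧Ω)` and a 2-form part `ι_{A^P}CS = λ*(A,dΘ)`; the second equation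
splits into `d(λ*(A,Θ)) = λ*(A,dΘ)` and `λ*(A, Θ(A^P)) = λ*(A,A)`. -/
theorem stmt13 {C T Fg g : Type*} [CommRing C] [Algebra ℝ C] [LieRing T]
    [LieRing Fg] [Module ℝ Fg] [LieRing g]
    (ac : T → C → C) (acg : T → Fg → Fg) (lamF : Fg → Fg → C) (Θ : T → Fg)
    (fund : g → T) (const : g → Fg)
    (hacadd : ∀ X f f', ac X (f + f') = ac X f + ac X f')
    (hacsmul : ∀ X (r : ℝ) (f : C), ac X (r • f) = r • ac X f)
    (haclie : ∀ X Y f, ac ⁅X, Y⁆ f = ac X (ac Y f) - ac Y (ac X f))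
    (hacgadd : ∀ X u v, acg X (u + v) = acg X u + acg X v)
    (hacglie : ∀ X Y u, acg ⁅X, Y⁆ u = acg X (acg Y u) - acg Y (acg X u))
    (hacgbr : ∀ X u v, acg X ⁅u, v⁆ = ⁅acg X u, v⁆ + ⁅u, acg X v⁆)
    (hlamadd1 : ∀ u u' v, lamF (u + u') v = lamF u v + lamF u' v)
    (hlamadd2 : ∀ u v v', lamF u (v + v') = lamF u v + lamF u v')
    (hlamsymm : ∀ u v, lamF u v = lamF v u)
    (hlaminv : ∀ w u v : Fg, lamF ⁅w, u⁆ v + lamF u ⁅w, v⁆ = 0)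
    (hlamder : ∀ X u v, ac X (lamF u v) = lamF (acg X u) v + lamF u (acg X v))
    (hΘadd : ∀ X Y, Θ (X + Y) = Θ X + Θ Y)
    -- the `G`-action: fundamental vector fields, constants, connection axioms
    (hfund : ∀ a b : g, fund ⁅a, b⁆ = ⁅fund a, fund b⁆)
    (hconstbr : ∀ a b : g, const ⁅a, b⁆ = ⁅const a, const b⁆)
    (hΘfund : ∀ a : g, Θ (fund a) = const a)
    (hconstder : ∀ (X : T) (a : g), acg X (const a) = 0)
    (hequivΘ : ∀ (a : g) (X : T),
      acg (fund a) (Θ X) - Θ ⁅fund a, X⁆ = - ⁅const a, Θ X⁆)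
    -- `dΘ`, curvature, and the Chern–Simons 3-form
    (dΘ : T → T → Fg)
    (hdΘ : ∀ X Y, dΘ X Y = acg X (Θ Y) - acg Y (Θ X) - Θ ⁅X, Y⁆)
    (Om : T → T → Fg)
    (hOm : ∀ X Y, Om X Y = dΘ X Y + ⁅Θ X, Θ Y⁆)
    (CS : T → T → T → C)
    (hCS : ∀ X Y Z, CS X Y Z
      = lamF (Θ X) (Om Y Z) - lamF (Θ Y) (Om X Z) + lamF (Θ Z) (Om X Y)
        - (6 : ℝ)⁻¹ •
          (lamF (Θ X) (⁅Θ Y, Θ Z⁆ - ⁅Θ Z, Θ Y⁆)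
            - lamF (Θ Y) (⁅Θ X, Θ Z⁆ - ⁅Θ Z, Θ X⁆)
            + lamF (Θ Z) (⁅Θ X, Θ Y⁆ - ⁅Θ Y, Θ X⁆))) :
    -- `(d_G CS)_A = λ*(Ω∧Ω) − λ*(A,dΘ)`:
    (∀ X Y Z Wv : T,
      ac X (CS Y Z Wv) - ac Y (CS X Z Wv) + ac Z (CS X Y Wv) - ac Wv (CS X Y Z)
        - CS ⁅X, Y⁆ Z Wv + CS ⁅X, Z⁆ Y Wv - CS ⁅X, Wv⁆ Y Z
        - CS ⁅Y, Z⁆ X Wv + CS ⁅Y, Wv⁆ X Z - CS ⁅Z, Wv⁆ X Y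
      = lamF (Om X Y) (Om Z Wv) - lamF (Om X Z) (Om Y Wv) + lamF (Om X Wv) (Om Y Z)
          + lamF (Om Y Z) (Om X Wv) - lamF (Om Y Wv) (Om X Z)
          + lamF (Om Z Wv) (Om X Y)) ∧
    (∀ (a : g) (X Y : T), CS (fund a) X Y = lamF (const a) (dΘ X Y)) ∧
    -- `(d_G λ*(−,Θ))_A = λ*(A,dΘ) − λ*(A,A)`:
    (∀ (a : g) (X Y : T),
      ac X (lamF (const a) (Θ Y)) - ac Y (lamF (const a) (Θ X))
        - lamF (const a) (Θ ⁅X, Y⁆) = lamF (const a) (dΘ X Y)) ∧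
    (∀ a : g, lamF (const a) (Θ (fund a)) = lamF (const a) (const a)) :=
  stmt13_general ac acg lamF Θ fund const hacadd hacgadd hacglie hacgbr hlamadd1 hlamadd2 hlamsymm
    hlaminv hlamder hΘadd hΘfund hconstder hequivΘ dΘ hdΘ Om hOm CS hCS
end
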